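/- arXiv:0804.0564 — 7 statements merged into one kernel-verified Lean document; each statement's English description precedes it below -/
import Mathlib

section
/- (ββ elementary move identity, 4×4 case) Suppose the complex numbers K_{σ,τ}(m) (σ,τ ∈ {0,1,2}, m ∈ ℤ) satisfy, for all σ and m: β₁[K_{σ,1}(m−1) − δ_{σ=1,m=1}] + [K_{σ,1}(m) − δ_{σ=1,m=0}] = K_{σ,0}(m) (relation (81) with k=1), and K_{2,τ}(m) = [K_{1,τ}(m) − δ_{τ=1,m=0}] + β₂[K_{1,τ}(m−1) − δ_{τ=1,m=1}] (relation (82) with k=2). Then β₁ det M₁ = β₂ det M₂, where M₁ and M₂ are the 4×4 matrices displayed in (61): both built from entries K_{σ,τ}(·) at points (0,0),(1,0),(1,1),(2,1), where M₁ has the −1 correction at the (3,3) entry K_{1,1}(0)−1, and M₂ has the −1 correction at the (2,2) entry K_{1,1}(0)−1. -/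
set_option maxHeartbeats 1000000 in
lemma my_det_fin_four (A : Matrix (Fin 4) (Fin 4) ℂ) :
    A.det =
      A 0 0 * (A 1 1 * (A 2 2 * A 3 3 - A 2 3 * A 3 2)
             - A 1 2 * (A 2 1 * A 3 3 - A 2 3 * A 3 1)
             + A 1 3 * (A 2 1 * A 3 2 - A 2 2 * A 3 1))
    - A 0 1 * (A 1 0 * (A 2 2 * A 3 3 - A 2 3 * A 3 2)
             - A 1 2 * (A 2 0 * A 3 3 - A 2 3 * A 3 0)
             + A 1 3 * (A 2 0 * A 3 2 - A 2 2 * A 3 0))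
    + A 0 2 * (A 1 0 * (A 2 1 * A 3 3 - A 2 3 * A 3 1)
             - A 1 1 * (A 2 0 * A 3 3 - A 2 3 * A 3 0)
             + A 1 3 * (A 2 0 * A 3 1 - A 2 1 * A 3 0))
    - A 0 3 * (A 1 0 * (A 2 1 * A 3 2 - A 2 2 * A 3 1)
             - A 1 1 * (A 2 0 * A 3 2 - A 2 2 * A 3 0)
             + A 1 2 * (A 2 0 * A 3 1 - A 2 1 * A 3 0)) := by
  have h3 : (Fin.succ 2 : Fin 4) = 3 := rfl
  have hc : (Fin.castSucc 2 : Fin 4) = 2 := rfl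
  have hlt : ((1 : Fin 4) < Fin.succ 2) := by decide
  rw [Matrix.det_succ_row_zero]
  simp [Fin.sum_univ_succ, Matrix.det_fin_three, Fin.succAbove, Matrix.submatrix_apply,
    h3, hc, if_pos hlt]
  ring

set_option maxHeartbeats 1000000 in
/-- ββ elementary move identity, 4×4 case: β₁ det M₁ = β₂ det M₂. -/
theorem stmt_5
    (K : Fin 3 → Fin 3 → ℤ → ℂ) (β₁ β₂ : ℂ)
    (h81 : ∀ (σ : Fin 3) (m : ℤ),
      β₁ * (K σ 1 (m - 1) - (if σ = 1 ∧ m = 1 then 1 else 0))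
        + (K σ 1 m - (if σ = 1 ∧ m = 0 then 1 else 0)) = K σ 0 m)
    (h82 : ∀ (τ : Fin 3) (m : ℤ),
      K 2 τ m = (K 1 τ m - (if τ = 1 ∧ m = 0 then 1 else 0))
        + β₂ * (K 1 τ (m - 1) - (if τ = 1 ∧ m = 1 then 1 else 0))) :
    β₁ * Matrix.det
      !![K 0 0 0, K 0 1 0, K 0 1 (-1),   K 0 2 (-1);
         K 1 0 0, K 1 1 0, K 1 1 (-1),   K 1 2 (-1);
         K 1 0 1, K 1 1 1, K 1 1 0 - 1,  K 1 2 0;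
         K 2 0 1, K 2 1 1, K 2 1 0,      K 2 2 0]
    = β₂ * Matrix.det
      !![K 0 0 0, K 0 1 0,     K 0 1 (-1), K 0 2 (-1);
         K 1 0 0, K 1 1 0 - 1, K 1 1 (-1), K 1 2 (-1);
         K 1 0 1, K 1 1 1,     K 1 1 0,    K 1 2 0;
         K 2 0 1, K 2 1 1,     K 2 1 0,    K 2 2 0] := by
  have a00 := h81 0 0; have a10 := h81 1 0; have a11 := h81 1 1
  have b01 := h82 0 1; have b11 := h82 1 1; have b10 := h82 1 0; have b20 := h82 2 0
  norm_num at a00 a10 a11 b01 b11 b10 b20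
  rw [if_neg (by decide)] at b20
  rw [my_det_fin_four, my_det_fin_four]
  simp only [Matrix.cons_val', Matrix.cons_val_zero, Matrix.cons_val_one, Matrix.head_cons,
    Matrix.empty_val', Matrix.cons_val_fin_one, Matrix.head_fin_const, Matrix.of_apply,
    Matrix.cons_val_two, Matrix.cons_val_three, Matrix.tail_cons]
  rw [b01, b11, b10, b20, ← a00, ← a10, ← a11]
  ring
end

section
/- (αα elementary move identity, 3×3 case) Suppose complex numbers K_{σ,τ}(m) (σ,τ ∈ {0,1,2}) satisfy for all relevant indices the relations K_{0,τ}(m) − δ_{τ=0,m=0} = K_{1,τ}(m) − α₁K_{1,τ}(m−1) and K_{σ,2}(m) − δ_{σ=2,m=0} = K_{σ,1}(m) − α₂K_{σ,1}(m−1). Then α₁·det [[K₀₀(0)−1, K₀₁(1), K₀₂(1)],[K₁₀(−1), K₁₁(0), K₁₂(0)],[K₂₀(−1), K₂₁(0), K₂₂(0)−1]] = α₂·det [[K₀₀(0)−1, K₀₁(0), K₀₂(1)],[K₁₀(0), K₁₁(0), K₁₂(1)],[K₂₀(−1), K₂₁(−1), K₂₂(0)−1]]. -/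
/-- αα elementary move identity, 3×3 case. -/
theorem stmt_6
    (K : Fin 3 → Fin 3 → ℤ → ℂ) (α₁ α₂ : ℂ) (hα₁ : α₁ ≠ 0) (hα₂ : α₂ ≠ 0)
    (h1 : ∀ (τ : Fin 3) (m : ℤ),
      K 0 τ m - (if τ = 0 ∧ m = 0 then 1 else 0) = K 1 τ m - α₁ * K 1 τ (m - 1))
    (h2 : ∀ (σ : Fin 3) (m : ℤ),
      K σ 2 m - (if σ = 2 ∧ m = 0 then 1 else 0) = K σ 1 m - α₂ * K σ 1 (m - 1)) :
    α₁ * Matrix.det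
      !![K 0 0 0 - 1, K 0 1 1, K 0 2 1;
         K 1 0 (-1),  K 1 1 0, K 1 2 0;
         K 2 0 (-1),  K 2 1 0, K 2 2 0 - 1]
    = α₂ * Matrix.det
      !![K 0 0 0 - 1, K 0 1 0,    K 0 2 1;
         K 1 0 0,     K 1 1 0,    K 1 2 1;
         K 2 0 (-1),  K 2 1 (-1), K 2 2 0 - 1] := by
  have e1 := h1 0 0
  have e2 := h1 1 1
  have e3 := h1 1 0
  have e4 := h1 2 1
  have f1 := h2 1 0
  have f2 := h2 1 1
  have f3 := h2 2 0
  simp only [show ((1:Fin 3) = 0) = False from by decide,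
    show ((2:Fin 3) = 0) = False from by decide,
    show ((1:Fin 3) = 2) = False from by decide,
    show ((0:Fin 3) = 0) = True from by decide,
    show ((2:Fin 3) = 2) = True from by decide] at e1 e2 e3 e4 f1 f2 f3
  norm_num at e1 e2 e3 e4 f1 f2 f3
  simp [Matrix.det_fin_three]
  rw [e1, e2, e3, e4, f1, f2, f3]
  ring
end

section
/- (βα elementary move identity) Suppose complex numbers K_{σ,τ}(m) satisfy the relations K_{σ,0}(m) = β₁[K_{σ,1}(m−1) − δ_{σ=1,m=1}] + [K_{σ,1}(m) − δ_{σ=1,m=0}] and K_{σ,2}(m) − δ_{σ=2,m=0} = K_{σ,1}(m) − α₂K_{σ,1}(m−1) for all m and σ ∈ {0,1,2}. Then β₁·det [[K₀₀(0),K₀₁(−1),K₀₂(0)],[K₁₀(1),K₁₁(0)−1,K₁₂(1)],[K₂₀(0),K₂₁(−1),K₂₂(0)−1]] = −α₂·det [[K₀₀(0),K₀₁(−1),K₀₂(0)],[K₁₀(1),K₁₁(0),K₁₂(1)],[K₂₀(0),K₂₁(−1),K₂₂(0)−1]]. -/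
set_option maxHeartbeats 1000000


/-- βα elementary move identity. -/
theorem stmt_7
    (K : Fin 3 → Fin 3 → ℤ → ℂ) (β₁ α₂ : ℂ) (hβ₁ : β₁ ≠ 0) (hα₂ : α₂ ≠ 0)
    (h1 : ∀ (σ : Fin 3) (m : ℤ),
      K σ 0 m = β₁ * (K σ 1 (m - 1) - (if σ = 1 ∧ m = 1 then 1 else 0))
        + (K σ 1 m - (if σ = 1 ∧ m = 0 then 1 else 0)))
    (h2 : ∀ (σ : Fin 3) (m : ℤ),
      K σ 2 m - (if σ = 2 ∧ m = 0 then 1 else 0) = K σ 1 m - α₂ * K σ 1 (m - 1)) :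
    β₁ * Matrix.det
      !![K 0 0 0, K 0 1 (-1),   K 0 2 0;
         K 1 0 1, K 1 1 0 - 1,  K 1 2 1;
         K 2 0 0, K 2 1 (-1),   K 2 2 0 - 1]
    = -α₂ * Matrix.det
      !![K 0 0 0, K 0 1 (-1), K 0 2 0;
         K 1 0 1, K 1 1 0,    K 1 2 1;
         K 2 0 0, K 2 1 (-1), K 2 2 0 - 1] := by
  have e1 := h1 0 0
  have e2 := h1 1 1
  have e3 := h1 2 0
  have f1 := h2 0 0
  have f2 := h2 1 1
  have f3 := h2 2 0
  norm_num [Fin.ext_iff] at e1 e2 e3 f1 f2 f3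
  have f3' : K 2 2 0 = K 2 1 0 - α₂ * K 2 1 (-1) + 1 := by linear_combination f3
  simp [Matrix.det_fin_three]
  rw [e1, e2, e3, f1, f2, f3']
  ring
end

section
/- (αβ elementary move identity) Suppose complex numbers K_{σ,τ}(m) satisfy the relations K_{0,τ}(m) − δ_{τ=0,m=0} = K_{1,τ}(m) − α₁K_{1,τ}(m−1) and K_{2,τ}(m) = [K_{1,τ}(m) − δ_{τ=1,m=0}] + β₂[K_{1,τ}(m−1) − δ_{τ=1,m=1}] for all m and τ ∈ {0,1,2}. Then −α₁·det [[K₀₀(0)−1,K₀₁(1),K₀₂(0)],[K₁₀(−1),K₁₁(0),K₁₂(−1)],[K₂₀(0),K₂₁(1),K₂₂(0)]] = β₂·det [[K₀₀(0)−1,K₀₁(1),K₀₂(0)],[K₁₀(−1),K₁₁(0)−1,K₁₂(−1)],[K₂₀(0),K₂₁(1),K₂₂(0)]]. -/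
set_option maxHeartbeats 1000000


/-- αβ elementary move identity. -/
theorem stmt_8
    (K : Fin 3 → Fin 3 → ℤ → ℂ) (α₁ β₂ : ℂ) (hα₁ : α₁ ≠ 0) (hβ₂ : β₂ ≠ 0)
    (h1 : ∀ (τ : Fin 3) (m : ℤ),
      K 0 τ m - (if τ = 0 ∧ m = 0 then 1 else 0) = K 1 τ m - α₁ * K 1 τ (m - 1))
    (h2 : ∀ (τ : Fin 3) (m : ℤ),
      K 2 τ m = (K 1 τ m - (if τ = 1 ∧ m = 0 then 1 else 0))
        + β₂ * (K 1 τ (m - 1) - (if τ = 1 ∧ m = 1 then 1 else 0))) :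
    -α₁ * Matrix.det
      !![K 0 0 0 - 1, K 0 1 1, K 0 2 0;
         K 1 0 (-1),  K 1 1 0, K 1 2 (-1);
         K 2 0 0,     K 2 1 1, K 2 2 0]
    = β₂ * Matrix.det
      !![K 0 0 0 - 1, K 0 1 1,     K 0 2 0;
         K 1 0 (-1),  K 1 1 0 - 1, K 1 2 (-1);
         K 2 0 0,     K 2 1 1,     K 2 2 0] := by
  have e0 := h1 0 0
  have e1 := h1 1 1
  have e2 := h1 2 0
  have f0 := h2 0 0
  have f1 := h2 1 1
  have f2 := h2 2 0
  norm_num [show (2:Fin 3) ≠ 0 by decide, show (2:Fin 3) ≠ 1 by decide] at e0 e1 e2 f0 f1 f2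
  rw [e1, e2, f0, f1, f2, show K 0 0 0 - 1 = K 1 0 0 - α₁ * K 1 0 (-1) from e0]
  simp only [Matrix.det_fin_three, Matrix.cons_val', Matrix.cons_val_zero,
    Matrix.cons_val_one, Matrix.head_cons, Matrix.empty_val', Matrix.cons_val_fin_one,
    Matrix.head_fin_const, Matrix.cons_val_two, Matrix.tail_cons, Matrix.of_apply]
  ring
end

section
/- (Interlacing exclusion, 5×5 general-environment case) Let K_{σ,τ}(m) ∈ ℂ satisfy, for all σ ∈ {0,1,2,ζ} and m ∈ ℤ, the relation K_{σ,0}(m) = β₁[K_{σ,1}(m−1) − δ_{σ=1,m=1}] + [K_{σ,1}(m) − δ_{σ=1,m=0}] together with K_{2,τ}(m) = [K_{1,τ}(m) − δ_{τ=1,m=0}] + β₂[K_{1,τ}(m−1) − δ_{τ=1,m=1}] for all τ ∈ {0,1,2,ζ}. Then β₁ det M₁⁽⁵⁾ = β₂ det M₂⁽⁵⁾, where M₁⁽⁵⁾ and M₂⁽⁵⁾ are the 5×5 matrices of display (62), obtained from the 4×4 matrices of the ββ move identity by appending a fifth row and column of entries K_{ζ,·}(z−·) and K_{·,ζ}(·−z)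 with diagonal entry K_{ζ,ζ}(0). -/
set_option maxHeartbeats 4000000

lemma sA2_0_0 : (0:Fin 2).succAbove (0:Fin 1) = 1 := rfl
lemma sA2_1_0 : (1:Fin 2).succAbove (0:Fin 1) = 0 := rfl
lemma sS2_0 : Fin.succ (0:Fin 1) = (1:Fin 2) := rfl
lemma sA3_0_0 : (0:Fin 3).succAbove (0:Fin 2) = 1 := rfl
lemma sA3_0_1 : (0:Fin 3).succAbove (1:Fin 2) = 2 := rfl
lemma sA3_1_0 : (1:Fin 3).succAbove (0:Fin 2) = 0 := rfl
lemma sA3_1_1 : (1:Fin 3).succAbove (1:Fin 2) = 2 := rfl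
lemma sA3_2_0 : (2:Fin 3).succAbove (0:Fin 2) = 0 := rfl
lemma sA3_2_1 : (2:Fin 3).succAbove (1:Fin 2) = 1 := rfl
lemma sS3_0 : Fin.succ (0:Fin 2) = (1:Fin 3) := rfl
lemma sS3_1 : Fin.succ (1:Fin 2) = (2:Fin 3) := rfl
lemma sA4_0_0 : (0:Fin 4).succAbove (0:Fin 3) = 1 := rfl
lemma sA4_0_1 : (0:Fin 4).succAbove (1:Fin 3) = 2 := rfl
lemma sA4_0_2 : (0:Fin 4).succAbove (2:Fin 3) = 3 := rfl
lemma sA4_1_0 : (1:Fin 4).succAbove (0:Fin 3) = 0 := rfl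
lemma sA4_1_1 : (1:Fin 4).succAbove (1:Fin 3) = 2 := rfl
lemma sA4_1_2 : (1:Fin 4).succAbove (2:Fin 3) = 3 := rfl
lemma sA4_2_0 : (2:Fin 4).succAbove (0:Fin 3) = 0 := rfl
lemma sA4_2_1 : (2:Fin 4).succAbove (1:Fin 3) = 1 := rfl
lemma sA4_2_2 : (2:Fin 4).succAbove (2:Fin 3) = 3 := rfl
lemma sA4_3_0 : (3:Fin 4).succAbove (0:Fin 3) = 0 := rfl
lemma sA4_3_1 : (3:Fin 4).succAbove (1:Fin 3) = 1 := rfl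
lemma sA4_3_2 : (3:Fin 4).succAbove (2:Fin 3) = 2 := rfl
lemma sS4_0 : Fin.succ (0:Fin 3) = (1:Fin 4) := rfl
lemma sS4_1 : Fin.succ (1:Fin 3) = (2:Fin 4) := rfl
lemma sS4_2 : Fin.succ (2:Fin 3) = (3:Fin 4) := rfl
lemma sA5_0_0 : (0:Fin 5).succAbove (0:Fin 4) = 1 := rfl
lemma sA5_0_1 : (0:Fin 5).succAbove (1:Fin 4) = 2 := rfl
lemma sA5_0_2 : (0:Fin 5).succAbove (2:Fin 4) = 3 := rfl
lemma sA5_0_3 : (0:Fin 5).succAbove (3:Fin 4) = 4 := rfl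
lemma sA5_1_0 : (1:Fin 5).succAbove (0:Fin 4) = 0 := rfl
lemma sA5_1_1 : (1:Fin 5).succAbove (1:Fin 4) = 2 := rfl
lemma sA5_1_2 : (1:Fin 5).succAbove (2:Fin 4) = 3 := rfl
lemma sA5_1_3 : (1:Fin 5).succAbove (3:Fin 4) = 4 := rfl
lemma sA5_2_0 : (2:Fin 5).succAbove (0:Fin 4) = 0 := rfl
lemma sA5_2_1 : (2:Fin 5).succAbove (1:Fin 4) = 1 := rfl
lemma sA5_2_2 : (2:Fin 5).succAbove (2:Fin 4) = 3 := rfl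
lemma sA5_2_3 : (2:Fin 5).succAbove (3:Fin 4) = 4 := rfl
lemma sA5_3_0 : (3:Fin 5).succAbove (0:Fin 4) = 0 := rfl
lemma sA5_3_1 : (3:Fin 5).succAbove (1:Fin 4) = 1 := rfl
lemma sA5_3_2 : (3:Fin 5).succAbove (2:Fin 4) = 2 := rfl
lemma sA5_3_3 : (3:Fin 5).succAbove (3:Fin 4) = 4 := rfl
lemma sA5_4_0 : (4:Fin 5).succAbove (0:Fin 4) = 0 := rfl
lemma sA5_4_1 : (4:Fin 5).succAbove (1:Fin 4) = 1 := rfl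
lemma sA5_4_2 : (4:Fin 5).succAbove (2:Fin 4) = 2 := rfl
lemma sA5_4_3 : (4:Fin 5).succAbove (3:Fin 4) = 3 := rfl
lemma sS5_0 : Fin.succ (0:Fin 4) = (1:Fin 5) := rfl
lemma sS5_1 : Fin.succ (1:Fin 4) = (2:Fin 5) := rfl
lemma sS5_2 : Fin.succ (2:Fin 4) = (3:Fin 5) := rfl
lemma sS5_3 : Fin.succ (3:Fin 4) = (4:Fin 5) := rfl

lemma det5 (a00 a01 a02 a03 a04 a10 a11 a12 a13 a14 a20 a21 a22 a23 a24 a30 a31 a32 a33 a34 a40 a41 a42 a43 a44 : ℂ) :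
    Matrix.det !![a00, a01, a02, a03, a04;
                  a10, a11, a12, a13, a14;
                  a20, a21, a22, a23, a24;
                  a30, a31, a32, a33, a34;
                  a40, a41, a42, a43, a44] =
    a00*a11*a22*a33*a44 - a00*a11*a22*a34*a43 - a00*a11*a23*a32*a44 + a00*a11*a23*a34*a42
    + a00*a11*a24*a32*a43 - a00*a11*a24*a33*a42 - a00*a12*a21*a33*a44 + a00*a12*a21*a34*a43
    + a00*a12*a23*a31*a44 - a00*a12*a23*a34*a41 - a00*a12*a24*a31*a43 + a00*a12*a24*a33*a41
    + a00*a13*a21*a32*a44 - a00*a13*a21*a34*a42 - a00*a13*a22*a31*a44 + a00*a13*a22*a34*a41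
    + a00*a13*a24*a31*a42 - a00*a13*a24*a32*a41 - a00*a14*a21*a32*a43 + a00*a14*a21*a33*a42
    + a00*a14*a22*a31*a43 - a00*a14*a22*a33*a41 - a00*a14*a23*a31*a42 + a00*a14*a23*a32*a41
    - a01*a10*a22*a33*a44 + a01*a10*a22*a34*a43 + a01*a10*a23*a32*a44 - a01*a10*a23*a34*a42
    - a01*a10*a24*a32*a43 + a01*a10*a24*a33*a42 + a01*a12*a20*a33*a44 - a01*a12*a20*a34*a43
    - a01*a12*a23*a30*a44 + a01*a12*a23*a34*a40 + a01*a12*a24*a30*a43 - a01*a12*a24*a33*a40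
    - a01*a13*a20*a32*a44 + a01*a13*a20*a34*a42 + a01*a13*a22*a30*a44 - a01*a13*a22*a34*a40
    - a01*a13*a24*a30*a42 + a01*a13*a24*a32*a40 + a01*a14*a20*a32*a43 - a01*a14*a20*a33*a42
    - a01*a14*a22*a30*a43 + a01*a14*a22*a33*a40 + a01*a14*a23*a30*a42 - a01*a14*a23*a32*a40
    + a02*a10*a21*a33*a44 - a02*a10*a21*a34*a43 - a02*a10*a23*a31*a44 + a02*a10*a23*a34*a41
    + a02*a10*a24*a31*a43 - a02*a10*a24*a33*a41 - a02*a11*a20*a33*a44 + a02*a11*a20*a34*a43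
    + a02*a11*a23*a30*a44 - a02*a11*a23*a34*a40 - a02*a11*a24*a30*a43 + a02*a11*a24*a33*a40
    + a02*a13*a20*a31*a44 - a02*a13*a20*a34*a41 - a02*a13*a21*a30*a44 + a02*a13*a21*a34*a40
    + a02*a13*a24*a30*a41 - a02*a13*a24*a31*a40 - a02*a14*a20*a31*a43 + a02*a14*a20*a33*a41
    + a02*a14*a21*a30*a43 - a02*a14*a21*a33*a40 - a02*a14*a23*a30*a41 + a02*a14*a23*a31*a40
    - a03*a10*a21*a32*a44 + a03*a10*a21*a34*a42 + a03*a10*a22*a31*a44 - a03*a10*a22*a34*a41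
    - a03*a10*a24*a31*a42 + a03*a10*a24*a32*a41 + a03*a11*a20*a32*a44 - a03*a11*a20*a34*a42
    - a03*a11*a22*a30*a44 + a03*a11*a22*a34*a40 + a03*a11*a24*a30*a42 - a03*a11*a24*a32*a40
    - a03*a12*a20*a31*a44 + a03*a12*a20*a34*a41 + a03*a12*a21*a30*a44 - a03*a12*a21*a34*a40
    - a03*a12*a24*a30*a41 + a03*a12*a24*a31*a40 + a03*a14*a20*a31*a42 - a03*a14*a20*a32*a41
    - a03*a14*a21*a30*a42 + a03*a14*a21*a32*a40 + a03*a14*a22*a30*a41 - a03*a14*a22*a31*a40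
    + a04*a10*a21*a32*a43 - a04*a10*a21*a33*a42 - a04*a10*a22*a31*a43 + a04*a10*a22*a33*a41
    + a04*a10*a23*a31*a42 - a04*a10*a23*a32*a41 - a04*a11*a20*a32*a43 + a04*a11*a20*a33*a42
    + a04*a11*a22*a30*a43 - a04*a11*a22*a33*a40 - a04*a11*a23*a30*a42 + a04*a11*a23*a32*a40
    + a04*a12*a20*a31*a43 - a04*a12*a20*a33*a41 - a04*a12*a21*a30*a43 + a04*a12*a21*a33*a40
    + a04*a12*a23*a30*a41 - a04*a12*a23*a31*a40 - a04*a13*a20*a31*a42 + a04*a13*a20*a32*a41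
    + a04*a13*a21*a30*a42 - a04*a13*a21*a32*a40 - a04*a13*a22*a30*a41 + a04*a13*a22*a31*a40 := by
  simp [Matrix.det_succ_row_zero, Fin.sum_univ_succ,
    sA2_0_0, sA2_1_0, sS2_0, sA3_0_0, sA3_0_1, sA3_1_0, sA3_1_1, sA3_2_0, sA3_2_1, sS3_0, sS3_1, sA4_0_0, sA4_0_1, sA4_0_2, sA4_1_0, sA4_1_1, sA4_1_2, sA4_2_0, sA4_2_1, sA4_2_2, sA4_3_0, sA4_3_1, sA4_3_2, sS4_0, sS4_1, sS4_2, sA5_0_0, sA5_0_1, sA5_0_2, sA5_0_3, sA5_1_0, sA5_1_1, sA5_1_2, sA5_1_3, sA5_2_0, sA5_2_1, sA5_2_2, sA5_2_3, sA5_3_0, sA5_3_1, sA5_3_2, sA5_3_3, sA5_4_0, sA5_4_1, sA5_4_2, sA5_4_3, sS5_0, sS5_1, sS5_2, sS5_3]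
  ring

/-- Interlacing exclusion, 5×5 general-environment case (display (62)):
β₁ det M₁⁽⁵⁾ = β₂ det M₂⁽⁵⁾, with the extra index ζ encoded as 3 : Fin 4. -/
theorem stmt_13
    (K : Fin 4 → Fin 4 → ℤ → ℂ) (β₁ β₂ : ℂ) (z : ℤ)
    (h81 : ∀ (σ : Fin 4) (m : ℤ),
      K σ 0 m = β₁ * (K σ 1 (m - 1) - (if σ = 1 ∧ m = 1 then 1 else 0))
        + (K σ 1 m - (if σ = 1 ∧ m = 0 then 1 else 0)))
    (h82 : ∀ (τ : Fin 4) (m : ℤ),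
      K 2 τ m = (K 1 τ m - (if τ = 1 ∧ m = 0 then 1 else 0))
        + β₂ * (K 1 τ (m - 1) - (if τ = 1 ∧ m = 1 then 1 else 0))) :
    β₁ * Matrix.det
      !![K 0 0 0, K 0 1 0, K 0 1 (-1),  K 0 2 (-1), K 0 3 (-z);
         K 1 0 0, K 1 1 0, K 1 1 (-1),  K 1 2 (-1), K 1 3 (-z);
         K 1 0 1, K 1 1 1, K 1 1 0 - 1, K 1 2 0,    K 1 3 (1 - z);
         K 2 0 1, K 2 1 1, K 2 1 0,     K 2 2 0,    K 2 3 (1 - z);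
         K 3 0 z, K 3 1 z, K 3 1 (z-1), K 3 2 (z-1), K 3 3 0]
    = β₂ * Matrix.det
      !![K 0 0 0, K 0 1 0,     K 0 1 (-1),  K 0 2 (-1), K 0 3 (-z);
         K 1 0 0, K 1 1 0 - 1, K 1 1 (-1),  K 1 2 (-1), K 1 3 (-z);
         K 1 0 1, K 1 1 1,     K 1 1 0,     K 1 2 0,    K 1 3 (1 - z);
         K 2 0 1, K 2 1 1,     K 2 1 0,     K 2 2 0,    K 2 3 (1 - z);
         K 3 0 z, K 3 1 z,     K 3 1 (z-1), K 3 2 (z-1), K 3 3 0] := by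
  rw [det5, det5]
  simp only [h81, h82,
    show ((0:Fin 4) = 1) = False by decide, show ((1:Fin 4) = 1) = True by decide,
    show ((2:Fin 4) = 1) = False by decide, show ((3:Fin 4) = 1) = False by decide,
    show ((0:ℤ) = 1) = False by decide, show ((1:ℤ) = 1) = True by decide,
    show ((0:ℤ) = 0) = True by decide, show ((1:ℤ) = 0) = False by decide,
    false_and, true_and, and_true, and_false, if_false, if_true, sub_zero, mul_zero, mul_one]
  norm_num
  ring
end

section
/- If a determinantal random field on ℤ² assigns probability 0 to every 'forbidden' local pattern of the form (two particles at (k,x₁),(k,x₂) with only holes strictly between them in column k, and either zero or at least two particles at sites (k+1,x) with x₁ ≤ x < x₂), then the map π⁺ sending each particle (k,x) to the lowest particle (k+1,y) with y ≥ x is, almost surely on configurations where every column is doubly infinite and has infinitely many particles above and below every level, a well-defined bijection between particles of column k and particles of column k+1, and the connectors ω_{x,π⁺(x)} for distinct particles are pairwise disjoint. -/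
/-- Upward particle interlacing between columns k and k+1 (plus two-sided
unboundedness of particles in both columns) implies that π⁺, sending each
particle (k,x) to the lowest particle (k+1,y) with y ≥ x, is a well-defined
bijection, and the connectors of distinct particles are pairwise disjoint. -/
theorem stmt_15 (n : ℤ → ℤ → Prop) (k : ℤ)
    (hinter : ∀ x₁ x₂ : ℤ, x₁ < x₂ → n k x₁ → n k x₂ →
      (∀ x, x₁ < x → x < x₂ → ¬ n k x) →
      ∃! x : ℤ, x₁ ≤ x ∧ x < x₂ ∧ n (k + 1) x)
    (hub : ∀ c ∈ ({k, k + 1} : Set ℤ), ∀ x : ℤ,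
      (∃ y, x < y ∧ n c y) ∧ (∃ y, y < x ∧ n c y)) :
    ∃ f : ℤ → ℤ,
      (∀ x, n k x → x ≤ f x ∧ n (k + 1) (f x) ∧ ∀ y, x ≤ y → n (k + 1) y → f x ≤ y) ∧
      (∀ x x', n k x → n k x' → f x = f x' → x = x') ∧
      (∀ y, n (k + 1) y → ∃ x, n k x ∧ f x = y) ∧
      (∀ x x', n k x → n k x' → x ≠ x' →
        Disjoint (Set.Icc x (f x)) (Set.Icc x' (f x'))) := by
  classical
  have hk : k ∈ ({k, k + 1} : Set ℤ) := Or.inl rfl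
  have hk1 : (k + 1) ∈ ({k, k + 1} : Set ℤ) := Or.inr rfl
  -- existence of least particle in column k+1 above any x
  have hexist : ∀ x : ℤ, ∃ y, (x ≤ y ∧ n (k + 1) y) ∧
      ∀ z, (x ≤ z ∧ n (k + 1) z) → y ≤ z := by
    intro x
    apply Int.exists_least_of_bdd (P := fun y => x ≤ y ∧ n (k + 1) y)
    · exact ⟨x, fun z hz => hz.1⟩
    · obtain ⟨y, hy, hny⟩ := ((hub (k + 1) hk1 (x - 1)).1)
      exact ⟨y, by omega, hny⟩
  choose f hf using hexist
  -- next particle in column k above a particle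
  have hnext : ∀ x : ℤ, n k x → ∃ x₂, x < x₂ ∧ n k x₂ ∧
      (∀ z, x < z → z < x₂ → ¬ n k z) := by
    intro x _
    obtain ⟨x₂, ⟨hx₂, hnx₂⟩, hmin⟩ :=
      Int.exists_least_of_bdd (P := fun z => x < z ∧ n k z)
        ⟨x + 1, fun z hz => by omega⟩ ((hub k hk x).1)
    exact ⟨x₂, hx₂, hnx₂, fun z h1 h2 hz => absurd (hmin z ⟨h1, hz⟩) (by omega)⟩
  -- key lemma: if x < x' are particles in column k then f x < x'
  have key : ∀ x x', n k x → n k x' → x < x' → f x < x' := by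
    intro x x' hx hx' hlt
    obtain ⟨x₂, h1, h2, h3⟩ := hnext x hx
    have hx₂le : x₂ ≤ x' := by
      by_contra h
      exact h3 x' hlt (by omega) hx'
    obtain ⟨w, ⟨hw1, hw2, hw3⟩, _⟩ := hinter x x₂ h1 hx h2 h3
    have := (hf x).2 w ⟨hw1, hw3⟩
    omega
  refine ⟨f, ?_, ?_, ?_, ?_⟩
  · intro x _
    exact ⟨(hf x).1.1, (hf x).1.2, fun y h1 h2 => (hf x).2 y ⟨h1, h2⟩⟩
  · intro x x' hx hx' hfe
    by_contra hne
    rcases lt_or_gt_of_ne hne with h | h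
    · have := key x x' hx hx' h
      have := (hf x').1.1
      omega
    · have := key x' x hx' hx h
      have := (hf x).1.1
      omega
  · intro y hy
    -- greatest particle in column k at or below y
    obtain ⟨x, ⟨hxn, hxy⟩, hmax⟩ :=
      Int.exists_greatest_of_bdd (P := fun z => n k z ∧ z ≤ y)
        ⟨y, fun z hz => hz.2⟩ (by
          obtain ⟨z, hz, hnz⟩ := (hub k hk (y + 1)).2
          exact ⟨z, hnz, by omega⟩)
    refine ⟨x, hxn, ?_⟩
    obtain ⟨x₂, h1, h2, h3⟩ := hnext x hxn
    have hyx₂ : y < x₂ := by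
      by_contra h
      have := hmax x₂ ⟨h2, by omega⟩
      omega
    obtain ⟨w, hw, huniq⟩ := hinter x x₂ h1 hxn h2 h3
    have hfle : f x ≤ y := (hf x).2 y ⟨hxy, hy⟩
    have e1 := huniq (f x) ⟨(hf x).1.1, by omega, (hf x).1.2⟩
    have e2 := huniq y ⟨hxy, hyx₂, hy⟩
    omega
  · intro x x' hx hx' hne
    rw [Set.disjoint_left]
    rcases lt_or_gt_of_ne hne with h | h
    · have hk' := key x x' hx hx' h
      have := (hf x').1.1
      intro a ha ha'
      simp only [Set.mem_Icc] at ha ha'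
      omega
    · have hk' := key x' x hx' hx h
      have := (hf x).1.1
      intro a ha ha'
      simp only [Set.mem_Icc] at ha ha'
      omega
end

section
/- (Hole interlacing forces nearest-neighbor steps) Suppose a configuration n : ℤ² → {0,1} satisfies upward hole interlacing between columns k and k+1: for any two holes n(k,x₁)=n(k,x₂)=0 with x₁<x₂ and n(k,x)=1 for all x₁<x<x₂, there is exactly one hole in {(k+1,x) : x₁ < x ≤ x₂}. Assume both columns have infinitely many holes in both directions. Then the map χ⁺ defined inductively on each maximal particle string by χ⁺(x₁+1) = min{x ≥ x₁+1 : n(k+1,x)=1} and χ⁺(x+1) = min{y > χ⁺(x) : n(k+1,y)=1} is a well-defined bijection between the particles of column k and the particles of column k+1, and satisfies χ⁺(x) ∈ {x, x+1} for every particle x. -/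
/-- Upward hole interlacing between columns k and k+1 (with infinitely many
holes in both directions in both columns) makes the inductively defined map χ⁺
a well-defined bijection between particles of the two columns, with
χ⁺(x) ∈ {x, x+1} for every particle x. -/
theorem stmt_16 (n : ℤ → ℤ → Prop) (k : ℤ)
    (hinter : ∀ x₁ x₂ : ℤ, x₁ < x₂ → ¬ n k x₁ → ¬ n k x₂ →
      (∀ x, x₁ < x → x < x₂ → n k x) →
      ∃! x : ℤ, x₁ < x ∧ x ≤ x₂ ∧ ¬ n (k + 1) x)
    (hholes : ∀ c ∈ ({k, k + 1} : Set ℤ), ∀ x : ℤ,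
      (∃ y, x < y ∧ ¬ n c y) ∧ (∃ y, y < x ∧ ¬ n c y)) :
    ∃ g : ℤ → ℤ,
      (∀ x, n k x → ¬ n k (x - 1) →
        (x ≤ g x ∧ n (k + 1) (g x) ∧ ∀ y, x ≤ y → n (k + 1) y → g x ≤ y)) ∧
      (∀ x, n k x → n k (x + 1) →
        (g x < g (x + 1) ∧ n (k + 1) (g (x + 1)) ∧
          ∀ y, g x < y → n (k + 1) y → g (x + 1) ≤ y)) ∧
      (∀ x, n k x → n (k + 1) (g x)) ∧
      (∀ x x', n k x → n k x' → g x = g x' → x = x') ∧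
      (∀ y, n (k + 1) y → ∃ x, n k x ∧ g x = y) ∧
      (∀ x, n k x → g x = x ∨ g x = x + 1) := by
  classical
  have hkk : k ∈ ({k, k + 1} : Set ℤ) := Set.mem_insert _ _
  -- greatest hole below x in column k
  have hgb : ∀ x : ℤ, ∃ u, (u < x ∧ ¬ n k u) ∧ ∀ z, z < x ∧ ¬ n k z → z ≤ u :=
    fun x => Int.exists_greatest_of_bdd ⟨x, fun z hz => hz.1.le⟩ ((hholes k hkk x).2)
  -- least hole above x in column k
  have hla : ∀ x : ℤ, ∃ w, (x < w ∧ ¬ n k w) ∧ ∀ z, x < z ∧ ¬ n k z → w ≤ z :=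
    fun x => Int.exists_least_of_bdd ⟨x, fun z hz => hz.1.le⟩ ((hholes k hkk x).1)
  -- the condition for jumping
  set G : ℤ → Prop := fun x => ∃ v, v ≤ x ∧ ¬ n (k + 1) v ∧ ∀ z, v ≤ z → z < x → n k z
    with hGdef
  obtain ⟨g, hg⟩ : ∃ g : ℤ → ℤ, ∀ x, (G x → g x = x + 1) ∧ (¬ G x → g x = x) :=
    ⟨fun x => if G x then x + 1 else x, fun x => ⟨fun h => if_pos h, fun h => if_neg h⟩⟩
  -- the main structure lemma: for a particle x of column k, get the maximal string
  -- endpoints u < x < w and the unique hole v of column k+1 in (u, w].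
  have main : ∀ x, n k x → ∃ u w v : ℤ,
      u < x ∧ x < w ∧ ¬ n k u ∧ ¬ n k w ∧
      (∀ z, z < x → ¬ n k z → z ≤ u) ∧
      (∀ z, x < z → ¬ n k z → w ≤ z) ∧
      (∀ z, u < z → z < w → n k z) ∧
      u < v ∧ v ≤ w ∧ ¬ n (k + 1) v ∧
      (∀ z, u < z → z ≤ w → ¬ n (k + 1) z → z = v) ∧
      (∀ z, u < z → z ≤ w → z ≠ v → n (k + 1) z) ∧
      (G x ↔ v ≤ x) := by
    intro x hx
    obtain ⟨u, ⟨hux, hu⟩, humax⟩ := hgb x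
    obtain ⟨w, ⟨hxw, hw⟩, hwmin⟩ := hla x
    have hstring : ∀ z, u < z → z < w → n k z := by
      intro z h1 h2
      by_contra hz
      rcases lt_trichotomy z x with h | h | h
      · exact absurd (humax z ⟨h, hz⟩) (not_le.mpr h1)
      · exact hz (h ▸ hx)
      · exact absurd (hwmin z ⟨h, hz⟩) (not_le.mpr h2)
    obtain ⟨v, ⟨hv1, hv2, hv3⟩, hvuniq⟩ := hinter u w (hux.trans hxw) hu hw hstring
    refine ⟨u, w, v, hux, hxw, hu, hw, (fun z h1 h2 => humax z ⟨h1, h2⟩),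
      (fun z h1 h2 => hwmin z ⟨h1, h2⟩), hstring, hv1, hv2, hv3,
      (fun z h1 h2 h3 => hvuniq z ⟨h1, h2, h3⟩), ?_, ?_⟩
    · intro z h1 h2 hz
      by_contra hcon
      exact hz (hvuniq z ⟨h1, h2, hcon⟩)
    · constructor
      · rintro ⟨v', hv'x, hv'hole, hv'str⟩
        have huv' : u < v' := by
          by_contra h
          exact hu (hv'str u (not_lt.mp h) hux)
        have hvv : v' = v := hvuniq v' ⟨huv', hv'x.trans hxw.le, hv'hole⟩
        omega
      · intro hvx
        exact ⟨v, hvx, hv3, fun z h1 h2 =>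
          hstring z (lt_of_lt_of_le hv1 h1) (h2.trans hxw)⟩
  -- bullet 6: range
  have hrange : ∀ x, n k x → g x = x ∨ g x = x + 1 := by
    intro x _
    by_cases h : G x
    · exact Or.inr ((hg x).1 h)
    · exact Or.inl ((hg x).2 h)
  -- bullet 3: g maps particles to particles
  have hmem : ∀ x, n k x → n (k + 1) (g x) := by
    intro x hx
    obtain ⟨u, w, v, hux, hxw, hu, hw, humax, hwmin, hstr, hv1, hv2, hv3, hvuniq, hvpart,
      hiff⟩ := main x hx
    by_cases hvx : v ≤ x
    · rw [(hg x).1 (hiff.mpr hvx)]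
      exact hvpart (x + 1) (by omega) (by omega) (by omega)
    · rw [(hg x).2 (fun h => hvx (hiff.mp h))]
      exact hvpart x hux hxw.le (by omega)
  -- bullet 1: start of a string
  have hstart : ∀ x, n k x → ¬ n k (x - 1) →
      (x ≤ g x ∧ n (k + 1) (g x) ∧ ∀ y, x ≤ y → n (k + 1) y → g x ≤ y) := by
    intro x hx hx1
    obtain ⟨u, w, v, hux, hxw, hu, hw, humax, hwmin, hstr, hv1, hv2, hv3, hvuniq, hvpart,
      hiff⟩ := main x hx
    have hu' : u = x - 1 := le_antisymm (by omega) (humax (x - 1) (by omega) hx1)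
    by_cases hvx : v ≤ x
    · have hvv : v = x := by omega
      have hgx : g x = x + 1 := (hg x).1 (hiff.mpr hvx)
      refine ⟨by omega, hmem x hx, ?_⟩
      intro y h1 h2
      have hyx : y ≠ x := by
        rintro rfl
        exact hv3 (hvv ▸ h2)
      omega
    · have hgx : g x = x := (hg x).2 (fun h => hvx (hiff.mp h))
      exact ⟨by omega, hmem x hx, fun y h1 _ => by omega⟩
  -- bullet 2: successor within a string
  have hsucc : ∀ x, n k x → n k (x + 1) →
      (g x < g (x + 1) ∧ n (k + 1) (g (x + 1)) ∧
        ∀ y, g x < y → n (k + 1) y → g (x + 1) ≤ y) := by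
    intro x hx hx1
    obtain ⟨u, w, v, hux, hxw, hu, hw, humax, hwmin, hstr, hv1, hv2, hv3, hvuniq, hvpart,
      hiff⟩ := main x hx
    obtain ⟨u', w', v', hux', hxw', hu', hw', humax', hwmin', hstr', hv1', hv2', hv3',
      hvuniq', hvpart', hiff'⟩ := main (x + 1) hx1
    -- identify the data
    have huu : u' = u := by
      have h1 : u ≤ u' := humax' u (by omega) hu
      have h2 : u' ≤ u := by
        refine humax u' ?_ hu'
        have : u' ≠ x := fun h => hu' (h ▸ hx)
        omega
      omega
    have hww : w' = w := by
      have h1 : w' ≤ w := hwmin' w (by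
        have : w ≠ x + 1 := fun h => (h ▸ hw) hx1
        omega) hw
      have h2 : w ≤ w' := hwmin w' (by omega) hw'
      omega
    have hvv : v' = v := hvuniq v' (by omega) (by omega) hv3'
    by_cases hvx : v ≤ x
    · have hgx : g x = x + 1 := (hg x).1 (hiff.mpr hvx)
      have hgx1 : g (x + 1) = x + 2 := by
        have := (hg (x + 1)).1 (hiff'.mpr (by omega))
        omega
      exact ⟨by omega, hmem (x + 1) hx1, fun y h1 _ => by omega⟩
    · have hgx : g x = x := (hg x).2 (fun h => hvx (hiff.mp h))
      by_cases hvx1 : v ≤ x + 1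
      · have hvv' : v = x + 1 := by omega
        have hgx1 : g (x + 1) = x + 2 := by
          have := (hg (x + 1)).1 (hiff'.mpr (by omega))
          omega
        refine ⟨by omega, hmem (x + 1) hx1, ?_⟩
        intro y h1 h2
        have : y ≠ x + 1 := by
          rintro rfl
          exact hv3 (hvv' ▸ h2)
        omega
      · have hgx1 : g (x + 1) = x + 1 :=
          (hg (x + 1)).2 (fun h => hvx1 (hvv ▸ hiff'.mp h))
        exact ⟨by omega, hmem (x + 1) hx1, fun y h1 _ => by omega⟩
  -- bullet 4: injectivity
  have hinj : ∀ x x', n k x → n k x' → g x = g x' → x = x' := by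
    intro x x' hx hx' heq
    rcases lt_trichotomy x x' with h | h | h
    · exfalso
      have h1 := hrange x hx
      have h2 := hrange x' hx'
      have hxx : x' = x + 1 := by omega
      subst hxx
      exact absurd heq (ne_of_lt (hsucc x hx hx').1)
    · exact h
    · exfalso
      have h1 := hrange x hx
      have h2 := hrange x' hx'
      have hxx : x = x' + 1 := by omega
      subst hxx
      exact absurd heq.symm (ne_of_lt (hsucc x' hx' hx).1)
  -- bullet 5: surjectivity
  have hsurj : ∀ y, n (k + 1) y → ∃ x, n k x ∧ g x = y := by
    intro y hy
    by_cases hky : n k y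
    · obtain ⟨u, w, v, hux, hxw, hu, hw, humax, hwmin, hstr, hv1, hv2, hv3, hvuniq, hvpart,
        hiff⟩ := main y hky
      by_cases hvy : v ≤ y
      · have hvne : v ≠ y := fun h => hv3 (h ▸ hy)
        have hky1 : n k (y - 1) := by
          by_contra h
          have := humax (y - 1) (by omega) h
          omega
        refine ⟨y - 1, hky1, ?_⟩
        obtain ⟨u', w', v', hux', hxw', hu', hw', humax', hwmin', hstr', hv1', hv2', hv3',
          hvuniq', hvpart', hiff'⟩ := main (y - 1) hky1
        have huu : u' = u := by
          have h1 : u ≤ u' := humax' u (by omega) hu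
          have h2 : u' ≤ u := humax u' (by omega) hu'
          omega
        have hww : w' = w := by
          have hwne : w' ≠ y := fun h => (h ▸ hw') hky
          have h1 : w ≤ w' := hwmin w' (by omega) hw'
          have h2 : w' ≤ w := hwmin' w (by omega) hw
          omega
        have hvv : v' = v := hvuniq v' (by omega) (by omega) hv3'
        have := (hg (y - 1)).1 (hiff'.mpr (by omega))
        omega
      · exact ⟨y, hky, (hg y).2 (fun h => hvy (hiff.mp h))⟩
    · have hky1 : n k (y - 1) := by
        by_contra h
        obtain ⟨z, ⟨hz1, hz2, hz3⟩, -⟩ := hinter (y - 1) y (by omega) h hky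
          (fun z h1 h2 => absurd h1 (by omega))
        have hzy : z = y := by omega
        exact hz3 (hzy ▸ hy)
      obtain ⟨u, w, v, hux, hxw, hu, hw, humax, hwmin, hstr, hv1, hv2, hv3, hvuniq, hvpart,
        hiff⟩ := main (y - 1) hky1
      have hwy : w = y := by
        have := hwmin y (by omega) hky
        omega
      have hvne : v ≠ y := fun h => hv3 (h ▸ hy)
      refine ⟨y - 1, hky1, ?_⟩
      have := (hg (y - 1)).1 (hiff.mpr (by omega))
      omega
  exact ⟨g, hstart, hsucc, hmem, hinj, hsurj, hrange⟩
end
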